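/- Let k be a field, S := k[y₁,…,yₙ], and M an S-module that is finite-dimensional over k. Let λ₁,…,λₙ ∈ k and let m := (y₁ − λ₁, …, yₙ − λₙ) be the ideal they generate. If M/mM ≠ 0 (i.e. mM ≠ M), then for every i the scalar λᵢ is an eigenvalue of the k-linear endomorphism of M given by multiplication by yᵢ. -/
import Mathlib


open MvPolynomial

/-- if `m = (y₁ − λ₁, …, yₙ − λₙ)` satisfies `mM ≠ M` for a finite degree
`S`-module `M`, then each `λᵢ` is an eigenvalue of multiplication by `yᵢ` on `M`. -/
theorem eigenvalue_of_support (k : Type*) [Field k] (n : ℕ)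
    (M : Type*) [AddCommGroup M] [Module (MvPolynomial (Fin n) k) M]
    [Module k M] [IsScalarTower k (MvPolynomial (Fin n) k) M]
    [FiniteDimensional k M] (lam : Fin n → k)
    (h : (Ideal.span (Set.range fun i => (X i : MvPolynomial (Fin n) k) - C (lam i))) •
        (⊤ : Submodule (MvPolynomial (Fin n) k) M) ≠ ⊤) :
    ∀ i, Module.End.HasEigenvalue
      (((LinearMap.lsmul (MvPolynomial (Fin n) k) M (X i))).restrictScalars k)
      (lam i) := by
  intro i
  by_contra hc
  set f : Module.End k M := (LinearMap.lsmul (MvPolynomial (Fin n) k) M (X i)).restrictScalars k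
  set g : Module.End k M := f - lam i • 1 with hg
  have hker : LinearMap.ker g = ⊥ := by
    rw [← Module.End.eigenspace_def]
    exact not_ne_iff.mp hc
  have hinj : Function.Injective g := LinearMap.ker_eq_bot.mp hker
  have hsurj : Function.Surjective g :=
    (LinearMap.injective_iff_surjective).mp hinj
  apply h
  rw [eq_top_iff]
  intro m _
  obtain ⟨m', hm'⟩ := hsurj m
  have key : ((X i : MvPolynomial (Fin n) k) - C (lam i)) • m' = m := by
    rw [sub_smul]
    have : (C (lam i) : MvPolynomial (Fin n) k) • m' = lam i • m' := by
      rw [← algebraMap_eq, algebraMap_smul]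
    rw [this, ← hm']
    simp [g, f, LinearMap.lsmul]
  rw [← key]
  exact Submodule.smul_mem_smul (Ideal.subset_span ⟨i, rfl⟩) trivial
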